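/- Let (Σ,σ) be a finitely primitive Markov subshift on a countable alphabet and let A : Σ → ℝ be a bounded above, locally Hölder continuous potential. Let I ≥ I_F be an integer. If u ∈ C⁰(Σ_I) is a calibrated sub-action for the potential A|_{Σ_I}, then osc(u) := max_{x,y∈Σ_I} [u(x) − u(y)] ≤ Var(A) + K₀(sup A − inf A|_{⋃_{i∈F}[i]}). -/

import Mathlib

open MeasureTheory Filter Topology Set

/-- Membership in the Markov shift: admissible transitions at every coordinate. -/
def InShift (M : ℕ → ℕ → Bool) (x : ℕ → ℕ) : Prop := ∀ j, M (x j) (x (j+1)) = true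

/-- The one-sided countable Markov shift `Σ` associated to the transition matrix `M`,
as a subtype of `ℕ → ℕ` (with the product topology, which is the topology induced by
the metric `d(x,y) = λ^{min{j : x_j ≠ y_j}}`). -/
abbrev ShiftSpace (M : ℕ → ℕ → Bool) := {x : ℕ → ℕ // InShift M x}

/-- The left shift map `σ`. -/
def shiftMap (M : ℕ → ℕ → Bool) (x : ShiftSpace M) : ShiftSpace M :=
  ⟨fun j => x.1 (j+1), fun j => x.2 (j+1)⟩

/-- `Agree M k x y` means the points `x, y` coincide on the first `k` coordinates;
for `k ≥ 1` this is exactly `d(x,y) ≤ λ^k` for the metric of the paper. -/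
def Agree (M : ℕ → ℕ → Bool) (k : ℕ) (x y : ShiftSpace M) : Prop :=
  ∀ j < k, x.1 j = y.1 j

/-- The sets `B_n` of symbols admitting admissible words of length `n+1` starting at them. -/
def BSet (M : ℕ → ℕ → Bool) : ℕ → Set ℕ
  | 0 => {i | ∃ j, M i j = true}
  | n+1 => {i | ∃ j ∈ BSet M n, M i j = true}

/-- `⋂_{n ≥ 0} B_n`. -/
def BInf (M : ℕ → ℕ → Bool) : Set ℕ := ⋂ n, BSet M n

/-- `M` is primitive with connecting set `F` and connection length `K₀`: any two symbols
of `⋂ B_n` can be joined by an admissible word of length `K₀` with all letters in `F`. -/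
def Primitive (M : ℕ → ℕ → Bool) (F : Set ℕ) (K₀ : ℕ) : Prop :=
  ∀ i ∈ BInf M, ∀ j ∈ BInf M, ∃ p : ℕ → ℕ,
    p 0 = i ∧ p (K₀ + 1) = j ∧ (∀ t, 1 ≤ t → t ≤ K₀ → p t ∈ F) ∧
    (∀ t ≤ K₀, M (p t) (p (t+1)) = true)

/-- `A` is locally Hölder continuous with constant `H`:
`Var_k(A) ≤ H ⬝ λ^k` for every `k ≥ 1`. -/
def LocHolder (M : ℕ → ℕ → Bool) (lam H : ℝ) (A : ShiftSpace M → ℝ) : Prop :=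
  ∀ k : ℕ, 1 ≤ k → ∀ x y : ShiftSpace M, Agree M k x y → A x - A y ≤ H * lam ^ k

/-- `A` is coercive: `sup A|_{[i]} → -∞` as `i → ∞`. -/
def Coercive (M : ℕ → ℕ → Bool) (A : ShiftSpace M → ℝ) : Prop :=
  ∀ C : ℝ, ∃ N : ℕ, ∀ i : ℕ, N ≤ i → ∀ x : ShiftSpace M, x.1 0 = i → A x ≤ C

/-- The union of cylinders `⋃_{i ∈ F} [i]`. -/
def FCyl (M : ℕ → ℕ → Bool) (F : Set ℕ) : Set (ShiftSpace M) := {x | x.1 0 ∈ F}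

/-- `μ` is a `σ`-invariant Borel probability measure. -/
def InvProb (M : ℕ → ℕ → Bool) (μ : Measure (ShiftSpace M)) : Prop :=
  IsProbabilityMeasure μ ∧ μ.map (shiftMap M) = μ

/-- The ergodic maximizing value `β_A = sup {∫ A dμ : μ ∈ M_σ}`. -/
noncomputable def betaA (M : ℕ → ℕ → Bool) (A : ShiftSpace M → ℝ) : ℝ :=
  sSup {r | ∃ μ : Measure (ShiftSpace M), InvProb M μ ∧ Integrable A μ ∧ ∫ x, A x ∂μ = r}

/-- The compact subshift `Σ_I` on the finite alphabet `{0, …, I}`. -/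
def SpaceI (M : ℕ → ℕ → Bool) (I : ℕ) : Set (ShiftSpace M) := {x | ∀ j, x.1 j ≤ I}

/-- `β_A(I) = max {∫ A dμ : μ ∈ M_σ, supp μ ⊆ Σ_I}`. -/
noncomputable def betaAI (M : ℕ → ℕ → Bool) (A : ShiftSpace M → ℝ) (I : ℕ) : ℝ :=
  sSup {r | ∃ μ : Measure (ShiftSpace M), InvProb M μ ∧ μ (SpaceI M I) = 1 ∧
    Integrable A μ ∧ ∫ x, A x ∂μ = r}

/-- Birkhoff sum `S_k A`. -/
noncomputable def birkhoff (M : ℕ → ℕ → Bool) (A : ShiftSpace M → ℝ) (k : ℕ)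
    (x : ShiftSpace M) : ℝ :=
  ∑ j ∈ Finset.range k, A ((shiftMap M)^[j] x)

/-- The `k`-th variation `Var_k(A)`. -/
noncomputable def VarK (M : ℕ → ℕ → Bool) (A : ShiftSpace M → ℝ) (k : ℕ) : ℝ :=
  sSup {r | ∃ x y : ShiftSpace M, Agree M k x y ∧ A x - A y = r}

/-- `Var(A) = ∑_{k ≥ 1} Var_k(A)`. -/
noncomputable def VarSum (M : ℕ → ℕ → Bool) (A : ShiftSpace M → ℝ) : ℝ :=
  ∑' k : ℕ, VarK M A (k + 1)

/-- `sup A`. -/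
noncomputable def supA (M : ℕ → ℕ → Bool) (A : ShiftSpace M → ℝ) : ℝ :=
  sSup (Set.range A)

/-- `inf A|_{⋃_{i ∈ F} [i]}`. -/
noncomputable def infF (M : ℕ → ℕ → Bool) (F : Set ℕ) (A : ShiftSpace M → ℝ) : ℝ :=
  sInf (A '' FCyl M F)

/-- The defining set for `u_A(x)`: all values `S_k(A - β_A)(y)` with `σ^k(y) = x`. -/
noncomputable def uASet (M : ℕ → ℕ → Bool) (A : ShiftSpace M → ℝ) (x : ShiftSpace M) :
    Set ℝ :=
  {r | ∃ (k : ℕ) (y : ShiftSpace M), (shiftMap M)^[k] y = x ∧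
    birkhoff M A k y - k * betaA M A = r}

/-- The candidate minimal sub-action
`u_A(x) = sup {S_k(A - β_A)(y) : k ≥ 0, σ^k(y) = x}`. -/
noncomputable def uA (M : ℕ → ℕ → Bool) (A : ShiftSpace M → ℝ) (x : ShiftSpace M) : ℝ :=
  sSup (uASet M A x)

/-- The non-wandering set `Ω(A, I)` with respect to `A|_{Σ_I}`. -/
def NonWandering (M : ℕ → ℕ → Bool) (A : ShiftSpace M → ℝ) (I : ℕ) :
    Set (ShiftSpace M) :=
  {x | x ∈ SpaceI M I ∧ ∀ ε : ℝ, 0 < ε → ∀ m : ℕ,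
    ∃ y ∈ SpaceI M I, ∃ n : ℕ, 1 ≤ n ∧ Agree M m x y ∧
      Agree M m x ((shiftMap M)^[n] y) ∧
      |birkhoff M A n y - n * betaAI M A I| < ε}

/-!
Follow a calibrated backward orbit of `x` for `n` steps, reaching `xₙ` with
`u x = u xₙ + Sₙ A xₙ - n β`. Primitivity lets one splice the first `n` symbols of `xₙ`, a
connecting word of length `K₀` in `F` and then `y` into a point `z ∈ Σ_I` with `σ^{n+K₀} z = y`.
The sub-action inequality along the orbit of `z` gives
`u x - u y ≤ (u xₙ - u z) + (Sₙ A xₙ - Sₙ A z) + (K₀ β - S_{K₀} A (σⁿ z))`,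
where the second term is at most `Var A` and the third at most `K₀ (sup A - inf A|_F)`
(calibration forces `β ≤ sup A`). Since `xₙ` and `z` share their first `n` symbols, compactness
of `Σ_I` and continuity of `u` make the first term arbitrarily small for suitable `n`.
-/

section MarkovShift

variable {M : ℕ → ℕ → Bool}

theorem shiftMap_iterate_apply (n : ℕ) (x : ShiftSpace M) (t : ℕ) :
    ((shiftMap M)^[n] x).1 t = x.1 (t + n) := by
  induction n generalizing x with
  | zero => rfl
  | succ n ih => rw [Function.iterate_succ_apply, ih]; rfl

theorem Agree.mono {k l : ℕ} {x y : ShiftSpace M} (h : Agree M l x y) (hkl : k ≤ l) :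
    Agree M k x y :=
  fun j hj => h j (hj.trans_le hkl)

theorem Agree.shiftMap_iterate {k n : ℕ} {x y : ShiftSpace M} (h : Agree M (k + n) x y) :
    Agree M k ((shiftMap M)^[n] x) ((shiftMap M)^[n] y) := fun j hj => by
  simp only [shiftMap_iterate_apply]
  exact h _ (by omega)

theorem mem_BInf (x : ShiftSpace M) (t : ℕ) : x.1 t ∈ BInf M := by
  refine Set.mem_iInter.2 fun n => ?_
  induction n generalizing t with
  | zero => exact ⟨x.1 (t + 1), x.2 t⟩
  | succ n ih => exact ⟨x.1 (t + 1), ih (t + 1), x.2 t⟩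

theorem shiftMap_iterate_mem_SpaceI {I : ℕ} (n : ℕ) {x : ShiftSpace M} (hx : x ∈ SpaceI M I) :
    (shiftMap M)^[n] x ∈ SpaceI M I := fun t => by
  rw [shiftMap_iterate_apply]
  exact hx _

theorem isClosed_setOf_inShift : IsClosed {x : ℕ → ℕ | InShift M x} := by
  simp only [InShift, Set.ofPred_forall]
  exact isClosed_iInter fun j =>
    isClosed_eq (f := Function.uncurry M ∘ fun x : ℕ → ℕ => (x j, x (j + 1)))
      (continuous_of_discreteTopology.comp
        ((continuous_apply j).prodMk (continuous_apply (j + 1))))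
      continuous_const

theorem isCompact_SpaceI (I : ℕ) : IsCompact (SpaceI M I) := by
  have h : SpaceI M I = Subtype.val ⁻¹' Set.univ.pi fun _ : ℕ => Set.Iic I := by
    ext x
    simp only [SpaceI, Set.mem_ofPred_eq, Set.mem_preimage, Set.mem_univ_pi, Set.mem_Iic]
  rw [h]
  exact isClosed_setOf_inShift.isClosedEmbedding_subtypeVal.isCompact_preimage
    (isCompact_univ_pi fun _ => (Set.finite_Iic I).isCompact)

instance : FirstCountableTopology (ShiftSpace M) :=
  Topology.IsInducing.subtypeVal.firstCountableTopology

theorem tendsto_nhds_iff_eventually_coord_eq {ι : Type*} {l : Filter ι} {a : ι → ShiftSpace M}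
    {x : ShiftSpace M} : Tendsto a l (𝓝 x) ↔ ∀ t, ∀ᶠ i in l, (a i).1 t = x.1 t := by
  simp only [tendsto_subtype_rng, tendsto_pi_nhds, nhds_discrete, tendsto_pure]

theorem tendsto_of_agree {ι : Type*} {l : Filter ι} {a b : ι → ShiftSpace M} {N : ι → ℕ}
    {x : ShiftSpace M} (hN : Tendsto N l atTop) (hab : ∀ i, Agree M (N i) (a i) (b i))
    (ha : Tendsto a l (𝓝 x)) : Tendsto b l (𝓝 x) := by
  rw [tendsto_nhds_iff_eventually_coord_eq] at ha ⊢
  intro t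
  filter_upwards [ha t, hN.eventually_gt_atTop t] with i hi hNi
  rw [← hab i t hNi, hi]

theorem exists_sub_lt_of_agree {K : Set (ShiftSpace M)} (hK : IsCompact K)
    {u : ShiftSpace M → ℝ} (hu : ContinuousOn u K) {a b : ℕ → ShiftSpace M}
    (ha : ∀ m, a m ∈ K) (hb : ∀ m, b m ∈ K) (hab : ∀ m, Agree M m (a m) (b m))
    {ε : ℝ} (hε : 0 < ε) : ∃ m, u (a m) - u (b m) < ε := by
  obtain ⟨x, hx, φ, hφ, hax⟩ := hK.tendsto_subseq ha
  have hbx : Tendsto (b ∘ φ) atTop (𝓝 x) :=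
    tendsto_of_agree hφ.tendsto_atTop (fun m => hab (φ m)) hax
  have hlim : Tendsto (fun m => u (a (φ m)) - u (b (φ m))) atTop (𝓝 (u x - u x)) :=
    ((hu x hx).tendsto.comp (tendsto_nhdsWithin_iff.2 ⟨hax, .of_forall fun _ => ha _⟩)).sub
      ((hu x hx).tendsto.comp (tendsto_nhdsWithin_iff.2 ⟨hbx, .of_forall fun _ => hb _⟩))
  rw [sub_self] at hlim
  obtain ⟨m, hm⟩ := (hlim.eventually (gt_mem_nhds hε)).exists
  exact ⟨φ m, hm⟩

end MarkovShift

section Birkhoff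

variable {M : ℕ → ℕ → Bool} {A : ShiftSpace M → ℝ}

theorem birkhoff_add (a b : ℕ) (x : ShiftSpace M) :
    birkhoff M A (a + b) x = birkhoff M A a x + birkhoff M A b ((shiftMap M)^[a] x) := by
  rw [birkhoff, birkhoff, birkhoff, Finset.sum_range_add]
  congr 1
  refine Finset.sum_congr rfl fun j _ => ?_
  rw [← Function.iterate_add_apply, add_comm]

theorem birkhoff_succ_eq_add_birkhoff_shiftMap (n : ℕ) (x : ShiftSpace M) :
    birkhoff M A (n + 1) x = A x + birkhoff M A n (shiftMap M x) := by
  rw [add_comm, birkhoff_add]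
  simp [birkhoff]

theorem birkhoff_le_mul_supA (hA : BddAbove (Set.range A)) (n : ℕ) (x : ShiftSpace M) :
    birkhoff M A n x ≤ n * supA M A := by
  simpa [birkhoff] using Finset.sum_le_card_nsmul (Finset.range n) _ (supA M A)
    fun j _ => le_csSup hA ⟨(shiftMap M)^[j] x, rfl⟩

end Birkhoff

section Variation

variable {M : ℕ → ℕ → Bool} {A : ShiftSpace M → ℝ} {lam H : ℝ} {k : ℕ}

theorem bddAbove_varK_set (hA : LocHolder M lam H A) (hk : 1 ≤ k) :
    BddAbove {r | ∃ x y : ShiftSpace M, Agree M k x y ∧ A x - A y = r} :=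
  ⟨H * lam ^ k, by rintro _ ⟨x, y, hxy, rfl⟩; exact hA k hk x y hxy⟩

theorem sub_le_varK (hA : LocHolder M lam H A) (hk : 1 ≤ k) {x y : ShiftSpace M}
    (hxy : Agree M k x y) : A x - A y ≤ VarK M A k :=
  le_csSup (bddAbove_varK_set hA hk) ⟨x, y, hxy, rfl⟩

variable [Nonempty (ShiftSpace M)]

theorem varK_nonneg (hA : LocHolder M lam H A) (hk : 1 ≤ k) : 0 ≤ VarK M A k := by
  obtain ⟨x⟩ := ‹Nonempty (ShiftSpace M)›
  simpa using sub_le_varK hA hk (x := x) (y := x) fun _ _ => rfl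

theorem varK_le (hA : LocHolder M lam H A) (hk : 1 ≤ k) : VarK M A k ≤ H * lam ^ k := by
  obtain ⟨x⟩ := ‹Nonempty (ShiftSpace M)›
  exact csSup_le ⟨0, x, x, fun _ _ => rfl, sub_self _⟩ fun _ ⟨x, y, hxy, hr⟩ =>
    hr ▸ hA k hk x y hxy

theorem summable_varK (hA : LocHolder M lam H A) (hlam₀ : 0 ≤ lam) (hlam₁ : lam < 1) :
    Summable fun k => VarK M A (k + 1) :=
  .of_nonneg_of_le (fun k => varK_nonneg hA k.succ_pos) (fun k => varK_le hA k.succ_pos)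
    (((summable_geometric_of_lt_one hlam₀ hlam₁).mul_left (H * lam)).congr fun k => by ring)

theorem birkhoff_sub_le_varSum (hA : LocHolder M lam H A) (hlam₀ : 0 ≤ lam) (hlam₁ : lam < 1)
    {n : ℕ} {x y : ShiftSpace M} (hxy : Agree M n x y) :
    birkhoff M A n x - birkhoff M A n y ≤ VarSum M A :=
  calc birkhoff M A n x - birkhoff M A n y
      = ∑ j ∈ Finset.range n, (A ((shiftMap M)^[j] x) - A ((shiftMap M)^[j] y)) :=
        (Finset.sum_sub_distrib _ _).symm
    _ ≤ ∑ j ∈ Finset.range n, VarK M A (n - 1 - j + 1) :=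
        Finset.sum_le_sum fun j hj => by
          have hj := Finset.mem_range.1 hj
          exact sub_le_varK hA (by omega)
            (Agree.shiftMap_iterate (hxy.mono (by omega)))
    _ = ∑ j ∈ Finset.range n, VarK M A (j + 1) :=
        Finset.sum_range_reflect (fun j => VarK M A (j + 1)) n
    _ ≤ VarSum M A :=
        (summable_varK hA hlam₀ hlam₁).sum_le_tsum _ fun k _ => varK_nonneg hA k.succ_pos

end Variation

section CylinderInf

variable {M : ℕ → ℕ → Bool} {F : Set ℕ} {A : ShiftSpace M → ℝ} {lam H : ℝ}

/-- On each cylinder `[i]` the potential oscillates by at most `Var₁ A ≤ H λ`, and `F` is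
finite. -/
theorem bddBelow_image_FCyl (hA : LocHolder M lam H A) (hF : F.Finite) :
    BddBelow (A '' FCyl M F) := by
  have hsub : A '' FCyl M F ⊆ ⋃ i ∈ F, A '' {x | x.1 0 = i} := by
    rintro _ ⟨x, hx, rfl⟩
    exact Set.mem_biUnion hx ⟨x, rfl, rfl⟩
  refine BddBelow.mono hsub ((hF.bddBelow_biUnion).2 fun i _ => ?_)
  rcases Set.eq_empty_or_nonempty {x : ShiftSpace M | x.1 0 = i} with h | ⟨x₀, hx₀⟩
  · simp [h]
  · refine ⟨A x₀ - H * lam, ?_⟩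
    rintro _ ⟨x, hx, rfl⟩
    have h := hA 1 le_rfl x₀ x fun j hj => by
      obtain rfl : j = 0 := Nat.lt_one_iff.1 hj
      exact hx₀.trans hx.symm
    linarith [pow_one lam]

theorem infF_le (hA : LocHolder M lam H A) (hF : F.Finite) {x : ShiftSpace M}
    (hx : x.1 0 ∈ F) : infF M F A ≤ A x :=
  csInf_le (bddBelow_image_FCyl hA hF) ⟨x, hx, rfl⟩

theorem mul_infF_le_birkhoff (hA : LocHolder M lam H A) (hF : F.Finite) {n : ℕ}
    {x : ShiftSpace M} (hx : ∀ j < n, ((shiftMap M)^[j] x).1 0 ∈ F) :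
    n * infF M F A ≤ birkhoff M A n x := by
  simpa [birkhoff] using Finset.card_nsmul_le_sum (Finset.range n) _ _
    fun j hj => infF_le hA hF (hx j (Finset.mem_range.1 hj))

end CylinderInf

section SubAction

variable {M : ℕ → ℕ → Bool} {A u : ShiftSpace M → ℝ} {I : ℕ} {β : ℝ}

theorem add_birkhoff_le_of_subaction
    (hsub : ∀ x ∈ SpaceI M I, A x + u x - u (shiftMap M x) ≤ β) (n : ℕ) {x : ShiftSpace M}
    (hx : x ∈ SpaceI M I) : u x + birkhoff M A n x - n * β ≤ u ((shiftMap M)^[n] x) := by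
  induction n generalizing x with
  | zero => simp [birkhoff]
  | succ n ih =>
    have h := ih (x := shiftMap M x) (shiftMap_iterate_mem_SpaceI 1 hx)
    rw [birkhoff_succ_eq_add_birkhoff_shiftMap, Function.iterate_succ_apply]
    push_cast
    linarith [hsub x hx]

theorem exists_birkhoff_eq_of_calibrated
    (hcal : ∀ x ∈ SpaceI M I, ∃ y ∈ SpaceI M I, shiftMap M y = x ∧ A y + u y - u x = β)
    (n : ℕ) {x : ShiftSpace M} (hx : x ∈ SpaceI M I) :
    ∃ w ∈ SpaceI M I, u w + birkhoff M A n w - n * β = u x := by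
  induction n with
  | zero => exact ⟨x, hx, by simp [birkhoff]⟩
  | succ n ih =>
    obtain ⟨w, hw, hwx⟩ := ih
    obtain ⟨v, hv, rfl, hvw⟩ := hcal w hw
    refine ⟨v, hv, ?_⟩
    rw [birkhoff_succ_eq_add_birkhoff_shiftMap]
    push_cast
    linarith

/-- Averaging the calibrated identity along backward orbits of length `n → ∞`. -/
theorem le_supA_of_calibrated (hA : BddAbove (Set.range A)) (hu : BddAbove (u '' SpaceI M I))
    (hcal : ∀ x ∈ SpaceI M I, ∃ y ∈ SpaceI M I, shiftMap M y = x ∧ A y + u y - u x = β)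
    {x : ShiftSpace M} (hx : x ∈ SpaceI M I) : β ≤ supA M A := by
  obtain ⟨C, hC⟩ := hu
  have hbound (n : ℕ) : n * β ≤ n * supA M A + (C - u x) := by
    obtain ⟨w, hw, hwx⟩ := exists_birkhoff_eq_of_calibrated hcal n hx
    linarith [birkhoff_le_mul_supA hA n w, hC ⟨w, hw, rfl⟩]
  by_contra! h
  obtain ⟨n, hn⟩ := exists_nat_gt ((C - u x) / (β - supA M A))
  rw [div_lt_iff₀ (sub_pos.2 h)] at hn
  linarith [hbound n]

end SubAction

section Gluing

variable {M : ℕ → ℕ → Bool}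

/-- `g 0` is identified with the overlap symbol `f n` at time `n`. -/
def concatAt (f : ℕ → ℕ) (n : ℕ) (g : ℕ → ℕ) : ℕ → ℕ :=
  fun t => if t ≤ n then f t else g (t - n)

theorem concatAt_of_le {f g : ℕ → ℕ} {n t : ℕ} (ht : t ≤ n) : concatAt f n g t = f t :=
  if_pos ht

theorem concatAt_of_ge {f g : ℕ → ℕ} {n t : ℕ} (hfg : f n = g 0) (ht : n ≤ t) :
    concatAt f n g t = g (t - n) := by
  rcases ht.eq_or_lt with rfl | ht
  · rw [concatAt_of_le le_rfl, Nat.sub_self, hfg]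
  · exact if_neg ht.not_ge

theorem inShift_concatAt {f g : ℕ → ℕ} {n : ℕ} (hf : ∀ t < n, M (f t) (f (t + 1)) = true)
    (hfg : f n = g 0) (hg : InShift M g) : InShift M (concatAt f n g) := fun t => by
  rcases lt_or_ge t n with ht | ht
  · rw [concatAt_of_le ht.le, concatAt_of_le ht]
    exact hf t ht
  · rw [concatAt_of_ge hfg ht, concatAt_of_ge hfg (ht.trans t.le_succ), Nat.succ_sub ht]
    exact hg _

theorem exists_glue {F : Set ℕ} {K₀ I : ℕ} (hprim : Primitive M F K₀) (hFI : ∀ i ∈ F, i ≤ I)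
    {w y : ShiftSpace M} (hw : w ∈ SpaceI M I) (hy : y ∈ SpaceI M I) (n : ℕ) :
    ∃ z ∈ SpaceI M I, Agree M (n + 1) w z ∧
      (∀ j < K₀, ((shiftMap M)^[n + 1 + j] z).1 0 ∈ F) ∧ (shiftMap M)^[n + 1 + K₀] z = y := by
  obtain ⟨p, hp0, hpK, hpF, hpM⟩ := hprim _ (mem_BInf w n) _ (mem_BInf y 0)
  have hpy : InShift M (concatAt p (K₀ + 1) y.1) :=
    inShift_concatAt (fun t ht => hpM t (Nat.lt_succ_iff.1 ht)) hpK y.2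
  have hwp : w.1 n = concatAt p (K₀ + 1) y.1 0 := by rw [concatAt_of_le (Nat.zero_le _), hp0]
  let z : ShiftSpace M :=
    ⟨concatAt w.1 n (concatAt p (K₀ + 1) y.1), inShift_concatAt (fun t _ => w.2 t) hwp hpy⟩
  have hzp (j : ℕ) (hj : j ≤ K₀ + 1) : z.1 (n + j) = p j := by
    simp only [z, concatAt_of_ge hwp (Nat.le_add_right n j), Nat.add_sub_cancel_left,
      concatAt_of_le hj]
  have hwz : Agree M (n + 1) w z := fun t ht => (concatAt_of_le (Nat.lt_succ_iff.1 ht)).symm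
  have hzF (j : ℕ) (hj : j < K₀) : ((shiftMap M)^[n + 1 + j] z).1 0 ∈ F := by
    rw [shiftMap_iterate_apply, show 0 + (n + 1 + j) = n + (j + 1) by omega, hzp _ (by omega)]
    exact hpF _ (by omega) hj
  have hzy : (shiftMap M)^[n + 1 + K₀] z = y := by
    refine Subtype.ext (funext fun t => ?_)
    rw [shiftMap_iterate_apply]
    simp only [z, concatAt_of_ge hwp (show n ≤ t + (n + 1 + K₀) by omega),
      concatAt_of_ge hpK (show K₀ + 1 ≤ t + (n + 1 + K₀) - n by omega)]
    rw [show t + (n + 1 + K₀) - n - (K₀ + 1) = t by omega]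
  refine ⟨z, fun t => ?_, hwz, hzF, hzy⟩
  rcases le_or_gt t n with htn | htn
  · rw [← hwz t (by omega)]
    exact hw t
  rcases le_or_gt t (n + K₀) with htK | htK
  · have h := hzF (t - n - 1) (by omega)
    rw [shiftMap_iterate_apply, show 0 + (n + 1 + (t - n - 1)) = t by omega] at h
    exact hFI _ h
  · have h := congrArg (fun v : ShiftSpace M => v.1 (t - (n + 1 + K₀))) hzy
    rw [shiftMap_iterate_apply, Nat.sub_add_cancel (by omega)] at h
    rw [h]
    exact hy _

end Gluing

theorem sub_le_of_glue {M : ℕ → ℕ → Bool} {F : Set ℕ} {K₀ I : ℕ} {lam H β : ℝ}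
    {A u : ShiftSpace M → ℝ} (hA : LocHolder M lam H A) (hlam₀ : 0 ≤ lam) (hlam₁ : lam < 1)
    (hF : F.Finite) (hsub : ∀ x ∈ SpaceI M I, A x + u x - u (shiftMap M x) ≤ β)
    (hβ : β ≤ supA M A) {n : ℕ} {x y w z : ShiftSpace M} (hz : z ∈ SpaceI M I)
    (hwz : Agree M n w z) (hzF : ∀ j < K₀, ((shiftMap M)^[n + j] z).1 0 ∈ F)
    (hzy : (shiftMap M)^[n + K₀] z = y) (hwx : u w + birkhoff M A n w - n * β = u x) :
    u x - u y ≤ (u w - u z) + VarSum M A + K₀ * (supA M A - infF M F A) := by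
  have : Nonempty (ShiftSpace M) := ⟨x⟩
  have hzy' := add_birkhoff_le_of_subaction hsub (n + K₀) hz
  rw [hzy, birkhoff_add] at hzy'
  have hvar := birkhoff_sub_le_varSum hA hlam₀ hlam₁ hwz
  have hinf := mul_infF_le_birkhoff hA hF (n := K₀) (x := (shiftMap M)^[n] z) fun j hj => by
    rw [← Function.iterate_add_apply, add_comm]
    exact hzF j hj
  have hK₀β := mul_le_mul_of_nonneg_left hβ K₀.cast_nonneg
  push_cast at hzy'
  linarith

theorem calibrated_subaction_oscillation_general
    (M : ℕ → ℕ → Bool) (F : Set ℕ) (K₀ : ℕ) (lam H : ℝ)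
    (hlam₀ : 0 < lam) (hlam₁ : lam < 1)
    (hprim : Primitive M F K₀) (hFfin : F.Finite)
    (A : ShiftSpace M → ℝ)
    (hbdd : BddAbove (Set.range A))
    (hhold : LocHolder M lam H A)
    (I : ℕ) (hI : sSup F ≤ I)
    (u : ShiftSpace M → ℝ)
    (hucont : ContinuousOn u (SpaceI M I))
    (hsub : ∀ x ∈ SpaceI M I, A x + u x - u (shiftMap M x) ≤ betaAI M A I)
    (hcal : ∀ x ∈ SpaceI M I, ∃ y ∈ SpaceI M I, shiftMap M y = x ∧
      A y + u y - u x = betaAI M A I) :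
    ∀ x ∈ SpaceI M I, ∀ y ∈ SpaceI M I,
      u x - u y ≤ VarSum M A + (K₀ : ℝ) * (supA M A - infF M F A) := by
  intro x hx y hy
  have hFI : ∀ i ∈ F, i ≤ I := fun i hi => (le_csSup hFfin.bddAbove hi).trans hI
  have hβ : betaAI M A I ≤ supA M A :=
    le_supA_of_calibrated hbdd ((isCompact_SpaceI I).bddAbove_image hucont) hcal hx
  choose w hw hwx using fun n => exists_birkhoff_eq_of_calibrated hcal (n + 1) hx
  choose z hz hwz hzF hzy using fun n => exists_glue hprim hFI (hw n) hy n
  refine le_of_forall_pos_lt_add fun ε hε => ?_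
  obtain ⟨n, hn⟩ := exists_sub_lt_of_agree (isCompact_SpaceI I) hucont hw hz
    (fun n => (hwz n).mono n.le_succ) hε
  have := sub_le_of_glue hhold hlam₀.le hlam₁ hFfin hsub hβ (hz n) (hwz n) (hzF n) (hzy n)
    (hwx n)
  linarith

/-- a calibrated sub-action `u` for `A|_{Σ_I}` (with `I ≥ I_F`) has
oscillation at most `Var(A) + K₀ (sup A - inf A|_{⋃_{i∈F}[i]})`. -/
theorem calibrated_subaction_oscillation
    (M : ℕ → ℕ → Bool) (F : Set ℕ) (K₀ : ℕ) (lam H : ℝ)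
    (hlam₀ : 0 < lam) (hlam₁ : lam < 1) (hH : 0 < H)
    (hprim : Primitive M F K₀) (hFfin : F.Finite)
    (A : ShiftSpace M → ℝ)
    (hbdd : BddAbove (Set.range A))
    (hhold : LocHolder M lam H A)
    (I : ℕ) (hI : sSup F ≤ I)
    (u : ShiftSpace M → ℝ)
    (hucont : ContinuousOn u (SpaceI M I))
    (hsub : ∀ x ∈ SpaceI M I, A x + u x - u (shiftMap M x) ≤ betaAI M A I)
    (hcal : ∀ x ∈ SpaceI M I, ∃ y ∈ SpaceI M I, shiftMap M y = x ∧
      A y + u y - u x = betaAI M A I) :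
    ∀ x ∈ SpaceI M I, ∀ y ∈ SpaceI M I,
      u x - u y ≤ VarSum M A + (K₀ : ℝ) * (supA M A - infF M F A) :=
  calibrated_subaction_oscillation_general M F K₀ lam H hlam₀ hlam₁ hprim hFfin A hbdd hhold I hI u
    hucont hsub hcal
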